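/- arXiv:1801.00550 — 2 statements merged into one kernel-verified Lean document; each statement's English description precedes it below -/
import Mathlib

section
/- Let k be an algebraically closed field complete with respect to a non-trivial non-Archimedean absolute value, and let f ∈ k{T} be a nonzero element of the Tate algebra (convergent power series on the closed unit disk). Then f factors as f = c · ∏_{j=1}^n (T - a_j) · u, where c ∈ k, the a_j lie in the closed unit disk (|a_j| ≤ 1), and u ∈ k{T} is a unit with |u(x)| = 1 for every point x of the closed unit disk (equivalently, u has Gauss norm 1 and all its coefficients of positive degree have absolute value strictly less than 1). -/
/-!
Let `N` be the Weierstrass degree of `f = ∑ cₙ Tⁿ`, the largest index at which `‖cₙ‖` is maximal.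
If `N = 0`, then `c₀⁻¹ f` is a unit of the required form. If `N > 0`, then `f` has a zero `a` in
the closed unit disk, and the quotient of `f` by `T - a` has Weierstrass degree `N - 1`, so
induction on `N` applies.

The zero `a` is a limit of zeros of the truncations `Pⱼ = ∑_{n ≤ N + j} cₙ Tⁿ`. Over an
algebraically closed field `Pⱼ` splits into linear factors. By Gauss's lemma, Weierstrass degrees
add and dominant coefficients multiply, so `Pⱼ` has exactly `N` roots in the disk and
`‖Pⱼ(x)‖ ≥ ‖c_N‖ · ‖x - r‖ ^ N` for the nearest of them, `r`. At a zero `x` of `Pⱼ`, the value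
`Pⱼ₊₁(x)` is a single term of norm at most `‖c_{N+j+1}‖`. So each zero of `Pⱼ` has a zero of
`Pⱼ₊₁` within distance `(‖c_{N+j+1}‖ / ‖c_N‖) ^ (1/N)`, and the zeros form a Cauchy sequence.
-/

/-- The Tate algebra `k{T}`: power series `∑ cₙ Tⁿ` whose coefficients tend to `0`,
i.e. convergent power series on the closed unit disk. -/
structure TateSeries (k : Type*) [NontriviallyNormedField k] where
  coeff : ℕ → k
  tendsto_zero : Filter.Tendsto (fun n => ‖coeff n‖) Filter.atTop (nhds 0)

/-- Evaluation of a Tate series at a point of the closed unit disk. -/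
noncomputable def TateSeries.eval {k : Type*} [NontriviallyNormedField k]
    (f : TateSeries k) (x : k) : k :=
  ∑' n : ℕ, f.coeff n * x ^ n

/-- The Gauss norm of a Tate series. -/
noncomputable def TateSeries.gaussNorm {k : Type*} [NontriviallyNormedField k]
    (f : TateSeries k) : ℝ :=
  ⨆ n : ℕ, ‖f.coeff n‖

open Filter Topology Polynomial IsUltrametricDist Finset.HasAntidiagonal

theorem finite_setOf_le_of_tendsto_zero {u : ℕ → ℝ} (hu : Tendsto u atTop (𝓝 0)) {ε : ℝ}
    (hε : 0 < ε) : {n | ε ≤ u n}.Finite := by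
  have h := hu.eventually (gt_mem_nhds hε)
  rw [← Nat.cofinite_eq_atTop, eventually_cofinite] at h
  simpa using h

theorem exists_forall_ge_of_tendsto_zero {u : ℕ → ℝ} (hu : Tendsto u atTop (𝓝 0))
    (hu0 : ∀ n, 0 ≤ u n) : ∃ m, ∀ n, u n ≤ u m := by
  by_cases h : ∀ n, u n ≤ 0
  · exact ⟨0, fun n => (h n).trans (hu0 0)⟩
  push Not at h
  obtain ⟨n₀, hn₀⟩ := h
  obtain ⟨m, hm₀, hm⟩ := Set.exists_max_image _ u (finite_setOf_le_of_tendsto_zero hu hn₀)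
    ⟨n₀, le_refl (u n₀)⟩
  refine ⟨m, fun n => ?_⟩
  by_cases hn : u n₀ ≤ u n
  · exact hm n hn
  · exact (not_le.1 hn).le.trans hm₀

section Ultrametric

variable {M : Type*} [SeminormedAddCommGroup M] [IsUltrametricDist M]

theorem norm_sum_lt_of_forall_lt {ι : Type*} {s : Finset ι} {f : ι → M} {C : ℝ} (hC : 0 < C)
    (h : ∀ i ∈ s, ‖f i‖ < C) : ‖∑ i ∈ s, f i‖ < C := by
  rcases s.eq_empty_or_nonempty with rfl | hs
  · simpa using hC
  obtain ⟨i, hi, hle⟩ := exists_norm_finsetSum_le_of_nonempty hs f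
  exact hle.trans_lt (h i hi)

theorem norm_tsum_lt_of_forall_lt {f : ℕ → M} (hf : Tendsto (‖f ·‖) atTop (𝓝 0)) {C : ℝ}
    (h : ∀ i, ‖f i‖ < C) : ‖∑' i, f i‖ < C := by
  obtain ⟨m, hm⟩ := exists_forall_ge_of_tendsto_zero hf fun n => norm_nonneg (f n)
  exact (norm_tsum_le_of_forall_le_of_nonneg (norm_nonneg _) hm).trans_lt (h m)

theorem norm_add_eq_left_of_norm_lt {x y : M} (h : ‖y‖ < ‖x‖) : ‖x + y‖ = ‖x‖ := by
  rw [norm_add_eq_max_of_norm_ne_norm h.ne', max_eq_left h.le]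

end Ultrametric

section WeierstrassDegree

variable {K : Type*} [NormedField K]

structure IsWeierstrassDegree (c : ℕ → K) (N : ℕ) : Prop where
  ne_zero : c N ≠ 0
  norm_le (n : ℕ) : ‖c n‖ ≤ ‖c N‖
  norm_lt (n : ℕ) : N < n → ‖c n‖ < ‖c N‖

namespace IsWeierstrassDegree

variable {c : ℕ → K} {N M : ℕ}

theorem norm_pos (h : IsWeierstrassDegree c N) : 0 < ‖c N‖ := norm_pos_iff.2 h.ne_zero

theorem unique (h : IsWeierstrassDegree c N) (h' : IsWeierstrassDegree c M) : N = M := by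
  by_contra hne
  rcases Nat.lt_or_gt_of_ne hne with hlt | hlt
  · exact (h.norm_lt M hlt).not_ge (h'.norm_le N)
  · exact (h'.norm_lt N hlt).not_ge (h.norm_le M)

end IsWeierstrassDegree

theorem exists_isWeierstrassDegree {c : ℕ → K} (hc : Tendsto (‖c ·‖) atTop (𝓝 0))
    (h : ∃ n, c n ≠ 0) : ∃ N, IsWeierstrassDegree c N := by
  obtain ⟨m, hm⟩ := exists_forall_ge_of_tendsto_zero hc fun n => norm_nonneg (c n)
  obtain ⟨n₀, hn₀⟩ := h
  have hpos : 0 < ‖c m‖ := (norm_pos_iff.2 hn₀).trans_le (hm n₀)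
  set A := {n | ‖c m‖ ≤ ‖c n‖}
  have hA : A.Finite := finite_setOf_le_of_tendsto_zero hc hpos
  have hmax : ‖c (sSup A)‖ = ‖c m‖ :=
    le_antisymm (hm _) (Nat.sSup_mem ⟨m, le_refl ‖c m‖⟩ hA.bddAbove)
  refine ⟨sSup A, norm_pos_iff.1 (hmax ▸ hpos), fun n => hmax ▸ hm n, fun n hn => hmax ▸ ?_⟩
  exact lt_of_not_ge fun hle => hn.not_ge (le_csSup hA.bddAbove hle)

theorem isWeierstrassDegree_C {a : K} (ha : a ≠ 0) : IsWeierstrassDegree (C a).coeff 0 := by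
  refine ⟨by simpa using ha, fun n => ?_, fun n hn => ?_⟩
  · rcases n with _ | n <;> simp [coeff_C]
  · simpa [coeff_C, hn.ne'] using ha

theorem isWeierstrassDegree_X_sub_C (r : K) :
    IsWeierstrassDegree (X - C r).coeff (if ‖r‖ ≤ 1 then 1 else 0) := by
  split_ifs with hr
  · refine ⟨by simp, fun n => ?_, fun n hn => ?_⟩
    · rcases n with _ | _ | n <;> simp [coeff_X, coeff_C, hr]
    · obtain ⟨n, rfl⟩ := Nat.exists_eq_add_of_lt hn
      simp [coeff_X]
  · push Not at hr
    refine ⟨by simpa using (zero_lt_one.trans hr).ne', fun n => ?_, fun n hn => ?_⟩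
    · rcases n with _ | _ | n <;> simp [coeff_X, coeff_C, hr.le, (zero_lt_one.trans hr).le]
    · rcases n with _ | _ | n <;> simp_all [coeff_X, coeff_C, (zero_lt_one.trans hr)]

end WeierstrassDegree

section Polynomial

variable {K : Type*} [NormedField K] {P Q : K[X]} {N M : ℕ}

namespace IsWeierstrassDegree

variable (hP : IsWeierstrassDegree P.coeff N) (hQ : IsWeierstrassDegree Q.coeff M)
include hP hQ

theorem norm_coeff_mul_coeff_lt {i j : ℕ} (h : N < i ∨ M < j) :
    ‖P.coeff i * Q.coeff j‖ < ‖P.coeff N‖ * ‖Q.coeff M‖ := by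
  rw [norm_mul]
  rcases h with h | h
  · exact mul_lt_mul_of_lt_of_le_of_nonneg_of_pos (hP.norm_lt i h) (hQ.norm_le j)
      (norm_nonneg _) hQ.norm_pos
  · exact mul_lt_mul_of_le_of_lt_of_nonneg_of_pos (hP.norm_le i) (hQ.norm_lt j h)
      (norm_nonneg _) hP.norm_pos

variable [IsUltrametricDist K]

theorem norm_coeff_mul : ‖(P * Q).coeff (N + M)‖ = ‖P.coeff N‖ * ‖Q.coeff M‖ := by
  have hNM : (N, M) ∈ antidiagonal (N + M) := mem_antidiagonal.2 rfl
  have hrest : ‖∑ x ∈ (antidiagonal (N + M)).erase (N, M), P.coeff x.1 * Q.coeff x.2‖ <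
      ‖P.coeff N * Q.coeff M‖ := by
    rw [norm_mul]
    refine norm_sum_lt_of_forall_lt (mul_pos hP.norm_pos hQ.norm_pos) fun x hx => ?_
    obtain ⟨hne, hx⟩ := Finset.mem_erase.1 hx
    rw [mem_antidiagonal] at hx
    refine hP.norm_coeff_mul_coeff_lt hQ ?_
    by_contra! h
    exact hne (Prod.ext (by omega) (by omega))
  rw [coeff_mul, ← Finset.add_sum_erase _ _ hNM, norm_add_eq_left_of_norm_lt hrest, norm_mul]

theorem mul : IsWeierstrassDegree (P * Q).coeff (N + M) := by
  refine ⟨norm_ne_zero_iff.1 ?_, fun n => ?_, fun n hn => ?_⟩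
  · rw [hP.norm_coeff_mul hQ]
    exact (mul_pos hP.norm_pos hQ.norm_pos).ne'
  · rw [hP.norm_coeff_mul hQ, coeff_mul]
    refine norm_sum_le_of_forall_le_of_nonneg (by positivity) fun x _ => ?_
    rw [norm_mul]
    exact mul_le_mul (hP.norm_le _) (hQ.norm_le _) (norm_nonneg _) (norm_nonneg _)
  · rw [hP.norm_coeff_mul hQ, coeff_mul]
    refine norm_sum_lt_of_forall_lt (mul_pos hP.norm_pos hQ.norm_pos) fun x hx => ?_
    rw [mem_antidiagonal] at hx
    exact hP.norm_coeff_mul_coeff_lt hQ (by omega)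

end IsWeierstrassDegree

variable [IsUltrametricDist K]

theorem isWeierstrassDegree_prod_X_sub_C (R : Multiset K) :
    IsWeierstrassDegree (R.map (X - C ·)).prod.coeff (R.countP (‖·‖ ≤ 1)) := by
  induction R using Multiset.induction_on with
  | empty => simpa using isWeierstrassDegree_C (one_ne_zero (α := K))
  | cons r R ih =>
    rw [Multiset.map_cons, Multiset.prod_cons, Multiset.countP_cons, add_comm]
    exact (isWeierstrassDegree_X_sub_C r).mul ih

theorem norm_coeff_X_sub_C_mul_pow_le {a r : K} (ha : ‖a‖ ≤ 1) {δ : ℝ}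
    (hδ : ‖r‖ ≤ 1 → δ ≤ ‖a - r‖) :
    ‖(X - C r).coeff (if ‖r‖ ≤ 1 then 1 else 0)‖ * δ ^ (if ‖r‖ ≤ 1 then 1 else 0) ≤ ‖a - r‖ := by
  split_ifs with hr
  · simpa using hδ hr
  · have hlt : ‖a‖ < ‖-r‖ := by simpa using ha.trans_lt (not_le.1 hr)
    simp [sub_eq_neg_add a, norm_add_eq_left_of_norm_lt hlt]

theorem norm_coeff_prod_X_sub_C_mul_pow_le (R : Multiset K) {a : K} (ha : ‖a‖ ≤ 1) {δ : ℝ}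
    (hδ : 0 ≤ δ) (hR : ∀ r ∈ R, ‖r‖ ≤ 1 → δ ≤ ‖a - r‖) :
    ‖(R.map (X - C ·)).prod.coeff (R.countP (‖·‖ ≤ 1))‖ * δ ^ R.countP (‖·‖ ≤ 1) ≤
      ‖(R.map (X - C ·)).prod.eval a‖ := by
  induction R using Multiset.induction_on with
  | empty => simp
  | cons r R ih =>
    simp only [Multiset.map_cons, Multiset.prod_cons, Multiset.countP_cons, add_comm _ (ite _ _ _)]
    rw [(isWeierstrassDegree_X_sub_C r).norm_coeff_mul (isWeierstrassDegree_prod_X_sub_C R),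
      eval_mul, norm_mul, pow_add, eval_sub, eval_X, eval_C]
    calc _ = (‖(X - C r).coeff (if ‖r‖ ≤ 1 then 1 else 0)‖ * δ ^ (if ‖r‖ ≤ 1 then 1 else 0)) *
          (‖(R.map (X - C ·)).prod.coeff (R.countP (‖·‖ ≤ 1))‖ * δ ^ R.countP (‖·‖ ≤ 1)) := by ring
      _ ≤ _ := mul_le_mul (norm_coeff_X_sub_C_mul_pow_le ha (hR r (Multiset.mem_cons_self r R)))
          (ih fun r' hr' => hR r' (Multiset.mem_cons_of_mem hr')) (by positivity) (norm_nonneg _)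

theorem exists_isRoot_norm_sub_pow_mul_le [IsAlgClosed K] (hP : IsWeierstrassDegree P.coeff N)
    (hN : N ≠ 0) {a : K} (ha : ‖a‖ ≤ 1) :
    ∃ r, ‖r‖ ≤ 1 ∧ P.IsRoot r ∧ ‖a - r‖ ^ N * ‖P.coeff N‖ ≤ ‖P.eval a‖ := by
  classical
  have hP0 : P ≠ 0 := fun h => hP.ne_zero (by simp [h])
  set R := P.roots
  have hfac : C P.leadingCoeff * (R.map (X - C ·)).prod = P :=
    (IsAlgClosed.splits P).eq_prod_roots.symm
  have hC := isWeierstrassDegree_C (leadingCoeff_ne_zero.2 hP0)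
  have hR := isWeierstrassDegree_prod_X_sub_C R
  have hW := hC.mul hR
  rw [hfac, zero_add] at hW
  obtain rfl := hP.unique hW
  have hnorm : ‖P.coeff (R.countP (‖·‖ ≤ 1))‖ =
      ‖P.leadingCoeff‖ * ‖(R.map (X - C ·)).prod.coeff (R.countP (‖·‖ ≤ 1))‖ := by
    simpa only [hfac, zero_add, coeff_C_zero] using hC.norm_coeff_mul hR
  obtain ⟨r₀, hr₀R, hr₀⟩ := Multiset.countP_pos.1 (Nat.pos_of_ne_zero hN)
  obtain ⟨r, hr, hmin⟩ := ((R.filter (‖·‖ ≤ 1)).toFinset).exists_min_image (‖a - ·‖)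
    ⟨r₀, by simpa using ⟨hr₀R, hr₀⟩⟩
  simp only [Multiset.mem_toFinset, Multiset.mem_filter] at hr hmin
  refine ⟨r, hr.2, isRoot_of_mem_roots hr.1, ?_⟩
  calc ‖a - r‖ ^ _ * ‖P.coeff _‖
      = ‖P.leadingCoeff‖ * (‖(R.map (X - C ·)).prod.coeff (R.countP (‖·‖ ≤ 1))‖ *
          ‖a - r‖ ^ R.countP (‖·‖ ≤ 1)) := by
        rw [hnorm]; ring
    _ ≤ ‖P.leadingCoeff‖ * ‖(R.map (X - C ·)).prod.eval a‖ :=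
        mul_le_mul_of_nonneg_left (norm_coeff_prod_X_sub_C_mul_pow_le R ha (norm_nonneg _)
          fun r' hr' hr'₁ => hmin r' ⟨hr', hr'₁⟩) (norm_nonneg _)
    _ = ‖P.eval a‖ := by
        conv_rhs => rw [← hfac]
        rw [eval_mul, eval_C, norm_mul]

end Polynomial

namespace TateSeries

section Basic

variable {k : Type*} [NontriviallyNormedField k]

theorem norm_mul_pow_le (c : k) {x : k} (hx : ‖x‖ ≤ 1) (n : ℕ) : ‖c * x ^ n‖ ≤ ‖c‖ := by
  rw [norm_mul, norm_pow]
  exact mul_le_of_le_one_right (norm_nonneg c) (pow_le_one₀ (norm_nonneg x) hx)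

theorem tendsto_norm_mul_pow {c : ℕ → k} (hc : Tendsto (‖c ·‖) atTop (𝓝 0)) {x : k}
    (hx : ‖x‖ ≤ 1) : Tendsto (fun n => ‖c n * x ^ n‖) atTop (𝓝 0) :=
  squeeze_zero (fun _ => norm_nonneg _) (fun n => norm_mul_pow_le (c n) hx n) hc

noncomputable def trunc (f : TateSeries k) (n : ℕ) : k[X] :=
  PowerSeries.trunc n (PowerSeries.mk f.coeff)

theorem coeff_trunc (f : TateSeries k) (n m : ℕ) :
    (f.trunc n).coeff m = if m < n then f.coeff m else 0 := by
  simp [trunc, PowerSeries.coeff_trunc]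

theorem eval_trunc (f : TateSeries k) (n : ℕ) (x : k) :
    (f.trunc n).eval x = ∑ i ∈ Finset.range n, f.coeff i * x ^ i := by
  simpa [trunc] using PowerSeries.eval₂_trunc_eq_sum_range x (RingHom.id k) n
    (PowerSeries.mk f.coeff)

theorem eval_trunc_succ (f : TateSeries k) (n : ℕ) (x : k) :
    (f.trunc (n + 1)).eval x = (f.trunc n).eval x + f.coeff n * x ^ n := by
  simp only [eval_trunc, Finset.sum_range_succ]

theorem _root_.IsWeierstrassDegree.trunc {f : TateSeries k} {N n : ℕ}
    (hf : IsWeierstrassDegree f.coeff N) (hn : N < n) :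
    IsWeierstrassDegree (f.trunc n).coeff N := by
  have hN : (f.trunc n).coeff N = f.coeff N := by rw [coeff_trunc, if_pos hn]
  refine ⟨hN ▸ hf.ne_zero, fun m => hN ▸ ?_, fun m hm => hN ▸ ?_⟩ <;> rw [coeff_trunc] <;>
    split_ifs
  exacts [hf.norm_le m, by simp, hf.norm_lt m hm, by simpa using hf.norm_pos]

instance : SMul k (TateSeries k) :=
  ⟨fun c f => ⟨fun n => c * f.coeff n, by simpa using f.tendsto_zero.const_mul ‖c‖⟩⟩

@[simp]
theorem coeff_smul (c : k) (f : TateSeries k) (n : ℕ) : (c • f).coeff n = c * f.coeff n := rfl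

theorem eval_smul (c : k) (f : TateSeries k) (x : k) : (c • f).eval x = c * f.eval x := by
  simp only [eval, coeff_smul, mul_assoc, tsum_mul_left]

theorem gaussNorm_eq_one (u : TateSeries k) (h₀ : ‖u.coeff 0‖ = 1) (h : ∀ n, ‖u.coeff n‖ ≤ 1) :
    u.gaussNorm = 1 :=
  le_antisymm (ciSup_le h) (h₀ ▸ le_ciSup ⟨1, Set.forall_mem_range.2 h⟩ 0)

theorem _root_.IsWeierstrassDegree.norm_coeff_inv_smul {g : TateSeries k}
    (hg : IsWeierstrassDegree g.coeff 0) :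
    ‖((g.coeff 0)⁻¹ • g).coeff 0‖ = 1 ∧ ∀ i, 0 < i → ‖((g.coeff 0)⁻¹ • g).coeff i‖ < 1 := by
  refine ⟨by simp [hg.ne_zero], fun i hi => ?_⟩
  rw [coeff_smul, norm_mul, norm_inv, inv_mul_lt_one₀ hg.norm_pos]
  exact hg.norm_lt i hi

end Basic

variable {k : Type*} [NontriviallyNormedField k] [IsUltrametricDist k]

theorem norm_pow_sub_pow_le {x y : k} (hx : ‖x‖ ≤ 1) (hy : ‖y‖ ≤ 1) (n : ℕ) :
    ‖x ^ n - y ^ n‖ ≤ ‖x - y‖ := by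
  rw [← geom_sum₂_mul, norm_mul]
  refine mul_le_of_le_one_left (norm_nonneg _)
    (norm_sum_le_of_forall_le_of_nonneg zero_le_one fun i _ => ?_)
  rw [norm_mul, norm_pow, norm_pow]
  exact mul_le_one₀ (pow_le_one₀ (norm_nonneg x) hx) (by positivity)
    (pow_le_one₀ (norm_nonneg y) hy)

theorem exists_seq_isRoot_trunc [IsAlgClosed k] (f : TateSeries k) {N : ℕ}
    (hf : IsWeierstrassDegree f.coeff N) (hN : N ≠ 0) :
    ∃ x : ℕ → k, (∀ j, ‖x j‖ ≤ 1) ∧ (∀ j, (f.trunc (N + 1 + j)).IsRoot (x j)) ∧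
      ∀ j, ‖x (j + 1) - x j‖ ^ N * ‖f.coeff N‖ ≤ ‖f.coeff (N + 1 + j)‖ := by
  have step (j : ℕ) (a : {a : k // ‖a‖ ≤ 1}) : ∃ r : {r : k // ‖r‖ ≤ 1},
      (f.trunc (N + 1 + j)).IsRoot r ∧
        ‖(a : k) - r‖ ^ N * ‖f.coeff N‖ ≤ ‖(f.trunc (N + 1 + j)).eval (a : k)‖ := by
    obtain ⟨r, hr, hroot, hle⟩ :=
      exists_isRoot_norm_sub_pow_mul_le (hf.trunc (by omega : N < N + 1 + j)) hN a.2
    rw [coeff_trunc, if_pos (by omega)] at hle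
    exact ⟨⟨r, hr⟩, hroot, hle⟩
  choose r hroot hle using step
  let x (j : ℕ) : {a : k // ‖a‖ ≤ 1} :=
    Nat.rec (motive := fun _ => {a : k // ‖a‖ ≤ 1}) (r 0 ⟨0, by simp⟩) (fun j y => r (j + 1) y) j
  have hx : ∀ j, (f.trunc (N + 1 + j)).IsRoot (x j).1 := fun j => by
    cases j <;> exact hroot _ _
  refine ⟨fun j => (x j).1, fun j => (x j).2, hx, fun j => ?_⟩
  have h := hle (j + 1) (x j)
  rw [← add_assoc, eval_trunc_succ, (hx j).eq_zero, zero_add] at h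
  rw [norm_sub_rev]
  exact h.trans (norm_mul_pow_le _ (x j).2 _)

section Quotient

variable {c : ℕ → k} {a : k}

theorem norm_tsum_coeff_mul_pow_le (ha : ‖a‖ ≤ 1) {n : ℕ} {B : ℝ} (hB : 0 ≤ B)
    (h : ∀ m, n < m → ‖c m‖ ≤ B) : ‖∑' i, c (i + (n + 1)) * a ^ i‖ ≤ B :=
  norm_tsum_le_of_forall_le_of_nonneg hB fun i => (norm_mul_pow_le _ ha i).trans (h _ (by omega))

theorem norm_tsum_coeff_mul_pow_lt (hc : Tendsto (‖c ·‖) atTop (𝓝 0)) (ha : ‖a‖ ≤ 1) {n : ℕ}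
    {B : ℝ} (h : ∀ m, n < m → ‖c m‖ < B) : ‖∑' i, c (i + (n + 1)) * a ^ i‖ < B :=
  norm_tsum_lt_of_forall_lt
    (tendsto_norm_mul_pow (c := fun i => c (i + (n + 1))) ((tendsto_add_atTop_iff_nat _).2 hc) ha)
    fun i => (norm_mul_pow_le _ ha i).trans_lt (h _ (by omega))

theorem tendsto_norm_tsum_coeff_mul_pow (hc : Tendsto (‖c ·‖) atTop (𝓝 0)) (ha : ‖a‖ ≤ 1) :
    Tendsto (fun n => ‖∑' i, c (i + (n + 1)) * a ^ i‖) atTop (𝓝 0) := by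
  refine tendsto_order.2 ⟨fun ε hε => .of_forall fun n => hε.trans_le (norm_nonneg _),
    fun ε hε => ?_⟩
  obtain ⟨M, hM⟩ := eventually_atTop.1 (hc.eventually (gt_mem_nhds hε))
  exact eventually_atTop.2 ⟨M, fun n hn => norm_tsum_coeff_mul_pow_lt hc ha fun m hm =>
    hM m (by omega)⟩

end Quotient

noncomputable def divXSubC (f : TateSeries k) {a : k} (ha : ‖a‖ ≤ 1) : TateSeries k where
  coeff n := ∑' i, f.coeff (i + (n + 1)) * a ^ i
  tendsto_zero := tendsto_norm_tsum_coeff_mul_pow f.tendsto_zero ha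

variable [CompleteSpace k]

theorem summable_mul_pow {c : ℕ → k} (hc : Tendsto (‖c ·‖) atTop (𝓝 0))
    {x : k} (hx : ‖x‖ ≤ 1) : Summable fun n => c n * x ^ n := by
  apply NonarchimedeanAddGroup.summable_of_tendsto_cofinite_zero
  rw [Nat.cofinite_eq_atTop]
  exact tendsto_zero_iff_norm_tendsto_zero.2 (tendsto_norm_mul_pow hc hx)

theorem norm_eval_sub_eval_le (f : TateSeries k) {B : ℝ}
    (hB : ∀ n, ‖f.coeff n‖ ≤ B) {x y : k} (hx : ‖x‖ ≤ 1) (hy : ‖y‖ ≤ 1) :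
    ‖f.eval x - f.eval y‖ ≤ B * ‖x - y‖ := by
  rw [eval, eval, ← (summable_mul_pow f.tendsto_zero hx).tsum_sub
    (summable_mul_pow f.tendsto_zero hy)]
  refine norm_tsum_le_of_forall_le_of_nonneg
    (mul_nonneg ((norm_nonneg _).trans (hB 0)) (norm_nonneg _)) fun n => ?_
  rw [← mul_sub, norm_mul]
  exact mul_le_mul (hB n) (norm_pow_sub_pow_le hx hy n) (norm_nonneg _)
    ((norm_nonneg _).trans (hB 0))

theorem norm_eval_sub_eval_trunc_le (f : TateSeries k) {x : k} (hx : ‖x‖ ≤ 1)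
    {n : ℕ} {ε : ℝ} (hε : 0 ≤ ε) (h : ∀ m, n ≤ m → ‖f.coeff m‖ ≤ ε) :
    ‖f.eval x - (f.trunc n).eval x‖ ≤ ε := by
  rw [eval, eval_trunc, ← (summable_mul_pow f.tendsto_zero hx).sum_add_tsum_nat_add n,
    add_sub_cancel_left]
  exact norm_tsum_le_of_forall_le_of_nonneg hε fun i =>
    (norm_mul_pow_le _ hx _).trans (h _ (Nat.le_add_left n i))

theorem exists_eval_eq_zero [IsAlgClosed k] (f : TateSeries k) {N : ℕ}
    (hf : IsWeierstrassDegree f.coeff N) (hN : N ≠ 0) : ∃ a, ‖a‖ ≤ 1 ∧ f.eval a = 0 := by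
  obtain ⟨x, hx, hroot, hstep⟩ := f.exists_seq_isRoot_trunc hf hN
  have htail : Tendsto (fun j => ‖f.coeff (N + 1 + j)‖) atTop (𝓝 0) :=
    f.tendsto_zero.comp (tendsto_atTop_mono (fun j => Nat.le_add_left j (N + 1)) tendsto_id)
  have hdiff : Tendsto (fun j => x (j + 1) - x j) atTop (𝓝 0) := by
    rw [tendsto_zero_iff_norm_tendsto_zero]
    have hpow : Tendsto (fun j => ‖x (j + 1) - x j‖ ^ N) atTop (𝓝 0) :=
      squeeze_zero (fun _ => by positivity) (fun j => (le_div_iff₀ hf.norm_pos).2 (hstep j))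
        (by simpa using htail.div_const ‖f.coeff N‖)
    simpa [Real.pow_rpow_inv_natCast (norm_nonneg _) hN, Real.zero_rpow, hN] using
      hpow.rpow_const (p := (N : ℝ)⁻¹) (Or.inr (by positivity))
  obtain ⟨a, ha⟩ := cauchySeq_tendsto_of_complete
    (NonarchimedeanAddGroup.cauchySeq_of_tendsto_sub_nhds_zero hdiff)
  have ha1 : ‖a‖ ≤ 1 := le_of_tendsto' ha.norm hx
  refine ⟨a, ha1, norm_le_zero_iff.1 (le_of_forall_pos_le_add fun ε hε => ?_)⟩
  rw [zero_add]
  have hclose : ∀ᶠ j in atTop, ‖f.coeff N‖ * ‖a - x j‖ ≤ ε := by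
    have h : Tendsto (fun j => ‖f.coeff N‖ * ‖a - x j‖) atTop (𝓝 0) := by
      simpa using ((tendsto_const_nhds (x := a)).sub ha).norm.const_mul ‖f.coeff N‖
    exact h.eventually (ge_mem_nhds hε)
  have hsmall : ∀ᶠ j in atTop, ∀ m, N + 1 + j ≤ m → ‖f.coeff m‖ ≤ ε := by
    obtain ⟨M, hM⟩ := eventually_atTop.1 (f.tendsto_zero.eventually (ge_mem_nhds hε))
    exact eventually_atTop.2 ⟨M, fun j _ m hm => hM m (by omega)⟩
  obtain ⟨j, hj₁, hj₂⟩ := (hclose.and hsmall).exists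
  calc ‖f.eval a‖
      = ‖(f.eval a - f.eval (x j)) + (f.eval (x j) - (f.trunc (N + 1 + j)).eval (x j))‖ := by
        rw [(hroot j).eq_zero]; ring_nf
    _ ≤ ε := (norm_add_le_max _ _).trans <|
        max_le ((f.norm_eval_sub_eval_le hf.norm_le ha1 (hx j)).trans hj₁)
          (f.norm_eval_sub_eval_trunc_le (hx j) hε.le hj₂)

theorem tsum_coeff_mul_pow_eq {c : ℕ → k} (hc : Tendsto (‖c ·‖) atTop (𝓝 0)) {a : k}
    (ha : ‖a‖ ≤ 1) (d : ℕ) :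
    ∑' i, c (i + d) * a ^ i = c d + a * ∑' i, c (i + (d + 1)) * a ^ i := by
  rw [(summable_mul_pow (c := fun i => c (i + d)) ((tendsto_add_atTop_iff_nat d).2 hc)
    ha).tsum_eq_zero_add, ← tsum_mul_left]
  congr 1
  · simp
  · exact tsum_congr fun i => by rw [pow_succ, Nat.add_right_comm, add_assoc]; ring

section Quotient

variable (f : TateSeries k) {a : k} (ha : ‖a‖ ≤ 1)

theorem coeff_divXSubC (n : ℕ) :
    (f.divXSubC ha).coeff n = f.coeff (n + 1) + a * (f.divXSubC ha).coeff (n + 1) :=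
  tsum_coeff_mul_pow_eq f.tendsto_zero ha (n + 1)

theorem coeff_zero_add_mul_coeff_divXSubC :
    f.coeff 0 + a * (f.divXSubC ha).coeff 0 = f.eval a := by
  have h := tsum_coeff_mul_pow_eq f.tendsto_zero ha 0
  simp only [add_zero, zero_add] at h
  exact h.symm

theorem eval_eq_mul_eval_divXSubC (hfa : f.eval a = 0) {x : k} (hx : ‖x‖ ≤ 1) :
    f.eval x = (x - a) * (f.divXSubC ha).eval x := by
  have hg : Summable fun n => (f.divXSubC ha).coeff n * x ^ n :=
    summable_mul_pow (f.divXSubC ha).tendsto_zero hx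
  have hg' : Summable fun n => (f.divXSubC ha).coeff (n + 1) * x ^ (n + 1) :=
    (summable_nat_add_iff (f := fun n => (f.divXSubC ha).coeff n * x ^ n) 1).2 hg
  have hc0 : f.coeff 0 = -(a * (f.divXSubC ha).coeff 0) := by
    linear_combination (coeff_zero_add_mul_coeff_divXSubC f ha).trans hfa
  calc f.eval x = f.coeff 0 + ∑' n, f.coeff (n + 1) * x ^ (n + 1) := by
        rw [eval, (summable_mul_pow f.tendsto_zero hx).tsum_eq_zero_add, pow_zero, mul_one]
    _ = -(a * (f.divXSubC ha).coeff 0) + ∑' n, (x * ((f.divXSubC ha).coeff n * x ^ n) -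
          a * ((f.divXSubC ha).coeff (n + 1) * x ^ (n + 1))) := by
        rw [hc0]
        congr 1
        exact tsum_congr fun n => by rw [coeff_divXSubC f ha n]; ring
    _ = x * ∑' n, (f.divXSubC ha).coeff n * x ^ n -
          a * ((f.divXSubC ha).coeff 0 + ∑' n, (f.divXSubC ha).coeff (n + 1) * x ^ (n + 1)) := by
        rw [(hg.mul_left x).tsum_sub (hg'.mul_left a), tsum_mul_left, tsum_mul_left]; ring
    _ = (x - a) * (f.divXSubC ha).eval x := by
        rw [eval, hg.tsum_eq_zero_add, pow_zero, mul_one]; ring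

theorem isWeierstrassDegree_divXSubC {N : ℕ} (hf : IsWeierstrassDegree f.coeff (N + 1)) :
    IsWeierstrassDegree (f.divXSubC ha).coeff N := by
  have hlt : ∀ n, N < n → ‖(f.divXSubC ha).coeff n‖ < ‖f.coeff (N + 1)‖ := fun n hn =>
    norm_tsum_coeff_mul_pow_lt f.tendsto_zero ha fun m hm => hf.norm_lt m (by omega)
  have hN : ‖(f.divXSubC ha).coeff N‖ = ‖f.coeff (N + 1)‖ := by
    have hsmall : ‖a * (f.divXSubC ha).coeff (N + 1)‖ < ‖f.coeff (N + 1)‖ := by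
      rw [norm_mul]
      exact (mul_le_of_le_one_left (norm_nonneg _) ha).trans_lt (hlt _ N.lt_succ_self)
    rw [coeff_divXSubC, norm_add_eq_left_of_norm_lt hsmall]
  refine ⟨norm_ne_zero_iff.1 (hN ▸ hf.norm_pos.ne'), fun n => hN ▸ ?_, fun n hn => hN ▸ hlt n hn⟩
  exact norm_tsum_coeff_mul_pow_le ha (norm_nonneg _) fun m _ => hf.norm_le m

end Quotient

theorem norm_eval_eq_one (u : TateSeries k) (h₀ : ‖u.coeff 0‖ = 1)
    (h : ∀ i, 0 < i → ‖u.coeff i‖ < 1) {x : k} (hx : ‖x‖ ≤ 1) : ‖u.eval x‖ = 1 := by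
  have htail : ‖∑' i, u.coeff (i + 1) * x ^ (i + 1)‖ < ‖u.coeff 0‖ :=
    h₀ ▸ norm_tsum_lt_of_forall_lt
      ((tendsto_norm_mul_pow u.tendsto_zero hx).comp (tendsto_add_atTop_nat 1))
      fun i => (norm_mul_pow_le _ hx _).trans_lt (h _ i.succ_pos)
  rw [eval, (summable_mul_pow u.tendsto_zero hx).tsum_eq_zero_add, pow_zero, mul_one,
    norm_add_eq_left_of_norm_lt htail, h₀]

theorem exists_prod_mul_of_isWeierstrassDegree [IsAlgClosed k] :
    ∀ {N : ℕ} {f : TateSeries k}, IsWeierstrassDegree f.coeff N →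
      ∃ (a : Fin N → k) (g : TateSeries k), (∀ j, ‖a j‖ ≤ 1) ∧
        IsWeierstrassDegree g.coeff 0 ∧ ∀ x, ‖x‖ ≤ 1 → f.eval x = (∏ j, (x - a j)) * g.eval x
  | 0, f, hf => ⟨Fin.elim0, f, fun j => j.elim0, hf, fun x _ => by simp⟩
  | N + 1, f, hf => by
    obtain ⟨a₀, ha₀, hroot⟩ := f.exists_eval_eq_zero hf N.succ_ne_zero
    obtain ⟨a, g, ha, hg, hfg⟩ :=
      exists_prod_mul_of_isWeierstrassDegree (f.isWeierstrassDegree_divXSubC ha₀ hf)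
    refine ⟨Fin.cons a₀ a, g, Fin.cases ha₀ ha, hg, fun x hx => ?_⟩
    rw [f.eval_eq_mul_eval_divXSubC ha₀ hroot hx, hfg x hx, Fin.prod_univ_succ, Fin.cons_zero]
    simp only [Fin.cons_succ, mul_assoc]

end TateSeries

/-- **Weierstrass preparation.** If `k` is algebraically closed, complete with respect to a
non-trivial non-Archimedean absolute value, and `f ∈ k{T}` is nonzero, then
`f = c · ∏ⱼ (T - aⱼ) · u` with `c ∈ k`, the `aⱼ` in the closed unit disk, and `u ∈ k{T}` a
unit with `|u(x)| = 1` for every `x` in the closed unit disk (equivalently, `u` has Gauss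
norm `1` and all its coefficients of positive degree have absolute value `< 1`). -/
theorem weierstrass_preparation_tate
    (k : Type*) [NontriviallyNormedField k] [IsUltrametricDist k]
    [IsAlgClosed k] [CompleteSpace k]
    (f : TateSeries k) (hf : ∃ n, f.coeff n ≠ 0) :
    ∃ (c : k) (n : ℕ) (a : Fin n → k) (u : TateSeries k),
      (∀ j, ‖a j‖ ≤ 1) ∧
      (∀ x : k, ‖x‖ ≤ 1 → ‖u.eval x‖ = 1) ∧
      u.gaussNorm = 1 ∧
      ‖u.coeff 0‖ = 1 ∧ (∀ i : ℕ, 0 < i → ‖u.coeff i‖ < 1) ∧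
      (∀ x : k, ‖x‖ ≤ 1 → f.eval x = c * (∏ j, (x - a j)) * u.eval x) := by
  obtain ⟨N, hN⟩ := exists_isWeierstrassDegree f.tendsto_zero hf
  obtain ⟨a, g, ha, hg, hfg⟩ := TateSeries.exists_prod_mul_of_isWeierstrassDegree hN
  obtain ⟨hu₀, hu⟩ := hg.norm_coeff_inv_smul
  have hu_le (n : ℕ) : ‖((g.coeff 0)⁻¹ • g).coeff n‖ ≤ 1 := by
    rcases n.eq_zero_or_pos with rfl | hn
    exacts [hu₀.le, (hu n hn).le]
  refine ⟨g.coeff 0, N, a, (g.coeff 0)⁻¹ • g, ha,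
    fun x hx => TateSeries.norm_eval_eq_one _ hu₀ hu hx, TateSeries.gaussNorm_eq_one _ hu₀ hu_le,
    hu₀, hu, fun x hx => ?_⟩
  rw [hfg x hx, TateSeries.eval_smul, mul_mul_mul_comm, mul_inv_cancel₀ hg.ne_zero, one_mul]
end

section
/- Let k be an algebraically closed complete non-Archimedean field and k^{max} a maximally complete algebraically closed extension with value group R_{>0} and the same residue field. Let x ∈ A^{1,an}_k be a point of type III, i.e. x = ζ_{a,r} with a ∈ k and r ∉ |k^*|. Then the preimage of x under the projection π : A^{1,an}_{k^{max}} → A^{1,an}_k is the set {z ∈ A^{1,an}_{k^{max}} : |T − a|(z) = r}, which is a closed annulus (over k^{max} the value r is attained since the value group of k^{max} is all of R_{>0}) whose skeleton consists of the single point ζ_{a,r} regarded over k^{max}. -/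
/-!
Expand `f ∈ k[T]` around `a` as `f = ∑ cₙ (T - a)ⁿ`. At any point `z` over `k^max` with
`|T - a|(z) = r`, the term `cₙ (T - a)ⁿ` has value `|cₙ| rⁿ`, and these values are pairwise
distinct: `|c_m| r^m = |c_n| r^n` with `m < n` would make `r` the absolute value of an
`(n - m)`-th root of `c_m / c_n`, which exists in the algebraically closed field `k`, contradicting
`r ∉ |k^*|`. Hence the ultrametric inequality is an equality, and
`z(f) = maxₙ |cₙ| rⁿ = ζ_{a,r}(f)`.
-/

/-- The Gauss point `ζ_{a,r}` of the Berkovich affine line over `k`. -/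
noncomputable def gaussPt (k : Type*) [NontriviallyNormedField k] (a : k) (r : ℝ) :
    Polynomial k → ℝ :=
  fun f => ⨆ n : ℕ, ‖(Polynomial.taylor a f).coeff n‖ * r ^ n

/-- A point of the Berkovich affine line over `K`: a multiplicative ultrametric
seminorm on `K[T]` extending the absolute value of `K`. -/
structure BerkPoint (K : Type*) [NontriviallyNormedField K] where
  toFun : Polynomial K → ℝ
  nonneg : ∀ f, 0 ≤ toFun f
  map_mul : ∀ f g, toFun (f * g) = toFun f * toFun g
  add_le : ∀ f g, toFun (f + g) ≤ max (toFun f) (toFun g)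
  map_C : ∀ c : K, toFun (Polynomial.C c) = ‖c‖

open Polynomial

namespace BerkPoint

variable {K : Type*} [NontriviallyNormedField K] (z : BerkPoint K)

lemma isNonarchimedean : IsNonarchimedean z.toFun := z.add_le

lemma map_zero : z.toFun 0 = 0 := by
  simpa using z.map_C 0

lemma map_neg (f : K[X]) : z.toFun (-f) = z.toFun f := by
  rw [neg_eq_neg_one_mul, ← C_1, ← C_neg, z.map_mul, z.map_C, norm_neg, norm_one, one_mul]

lemma map_pow (f : K[X]) (n : ℕ) : z.toFun (f ^ n) = z.toFun f ^ n := by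
  induction n with
  | zero => simpa using z.map_C 1
  | succ n ih => rw [pow_succ, pow_succ, z.map_mul, ih]

lemma map_C_mul_X_sub_C_pow {b : K} {r : ℝ} (hz : z.toFun (X - C b) = r) (c : K) (n : ℕ) :
    z.toFun (C c * (X - C b) ^ n) = ‖c‖ * r ^ n := by
  rw [z.map_mul, z.map_C, z.map_pow, hz]

end BerkPoint

section TypeIII

variable {k : Type*} [NontriviallyNormedField k] [IsAlgClosed k] {r : ℝ}

lemma norm_ne_pow_of_forall_norm_ne (hr : 0 ≤ r) (hr' : ∀ u : k, u ≠ 0 → ‖u‖ ≠ r)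
    {c : k} (hc : c ≠ 0) {m : ℕ} (hm : m ≠ 0) : ‖c‖ ≠ r ^ m := by
  intro h
  obtain ⟨u, rfl⟩ := IsAlgClosed.exists_pow_nat_eq c (Nat.pos_of_ne_zero hm)
  refine hr' u (by rintro rfl; exact hc (zero_pow hm)) ?_
  rw [norm_pow] at h
  exact (pow_left_inj₀ (norm_nonneg u) hr hm).mp h

lemma eq_of_norm_mul_pow_eq (hr : 0 < r) (hr' : ∀ u : k, u ≠ 0 → ‖u‖ ≠ r)
    {c d : k} (hc : c ≠ 0) (hd : d ≠ 0) {m n : ℕ} (h : ‖c‖ * r ^ m = ‖d‖ * r ^ n) : m = n := by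
  wlog hmn : m < n generalizing c d m n
  · rcases (not_lt.mp hmn).eq_or_lt with hnm | hnm
    · exact hnm.symm
    · exact (this hd hc h.symm hnm).symm
  refine absurd ?_ <|
    norm_ne_pow_of_forall_norm_ne hr.le hr' (div_ne_zero hc hd) (Nat.sub_ne_zero_of_lt hmn)
  rw [← Nat.sub_add_cancel hmn.le, pow_add, ← mul_assoc] at h
  rw [norm_div, div_eq_iff (norm_ne_zero_iff.mpr hd), mul_comm]
  exact mul_right_cancel₀ (pow_ne_zero _ hr.ne') h

end TypeIII

section Gauss

variable {k : Type*} [NontriviallyNormedField k]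

lemma gaussPt_eq_gaussNorm (a : k) {r : ℝ} (hr : 0 ≤ r) (f : k[X]) :
    gaussPt k a r f =
      (taylor a f).gaussNorm (IsAbsoluteValue.toAbsoluteValue (norm : k → ℝ)) r := by
  rw [← gaussNorm_coe_powerSeries _ _ hr, PowerSeries.gaussNorm_eq]
  simp [gaussPt]

lemma gaussPt_X_sub_C (a : k) {r : ℝ} (hr : 0 ≤ r) : gaussPt k a r (X - C a) = r := by
  rw [gaussPt_eq_gaussNorm a hr, map_sub, taylor_X, taylor_C, add_sub_cancel_right,
    ← monomial_one_one_eq_X, gaussNorm_monomial]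
  simp

lemma gaussPt_map {K : Type*} [NontriviallyNormedField K] (φ : k →+* K) (hφ : ∀ c, ‖φ c‖ = ‖c‖)
    (a : k) (r : ℝ) (f : k[X]) : gaussPt K (φ a) r (f.map φ) = gaussPt k a r f := by
  simp only [gaussPt, ← map_taylor, coeff_map, hφ]

end Gauss

lemma map_eq_sum_taylor {R S : Type*} [CommRing R] [CommRing S] (φ : R →+* S) (a : R)
    (f : R[X]) :
    f.map φ = ∑ n ∈ (taylor a f).support, C (φ ((taylor a f).coeff n)) * (X - C (φ a)) ^ n := by
  conv_lhs => rw [← sum_taylor_eq f a]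
  simp [Polynomial.sum, Polynomial.map_sum]

theorem BerkPoint.apply_map_eq_gaussPt {k K : Type*} [NontriviallyNormedField k] [IsAlgClosed k]
    [NontriviallyNormedField K] (φ : k →+* K) (hφ : ∀ c, ‖φ c‖ = ‖c‖) {a : k} {r : ℝ} (hr : 0 < r)
    (hr' : ∀ u : k, u ≠ 0 → ‖u‖ ≠ r) (z : BerkPoint K) (hz : z.toFun (X - C (φ a)) = r) (f : k[X]) :
    z.toFun (f.map φ) = gaussPt k a r f := by
  rw [gaussPt_eq_gaussNorm a hr.le, map_eq_sum_taylor φ a]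
  set v := IsAbsoluteValue.toAbsoluteValue (norm : k → ℝ)
  set p := taylor a f
  have hterm (n : ℕ) :
      z.toFun (C (φ (p.coeff n)) * (X - C (φ a)) ^ n) = ‖p.coeff n‖ * r ^ n := by
    rw [z.map_C_mul_X_sub_C_pow hz, hφ]
  rcases eq_or_ne p 0 with hp | hp
  · rw [hp, support_zero, Finset.sum_empty, gaussNorm_zero, z.map_zero]
  obtain ⟨i, hi⟩ := p.exists_eq_gaussNorm v r
  have hci : p.coeff i ≠ 0 := by
    intro h
    rw [h, v.map_zero, zero_mul, gaussNorm_eq_zero_iff v _ (fun _ => v.eq_zero.mp) hr] at hi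
    exact hp hi
  have hdom : ∀ j ∈ p.support, j ≠ i → ‖p.coeff j‖ * r ^ j < ‖p.coeff i‖ * r ^ i := by
    intro j hj hji
    refine (hi ▸ p.le_gaussNorm v hr.le j).lt_of_ne fun h => hji ?_
    exact eq_of_norm_mul_pow_eq hr hr' (mem_support_iff.mp hj) hci h
  rw [z.isNonarchimedean.apply_sum_eq_of_lt (fun f => (z.map_neg f).symm) (mem_support_iff.mpr hci)
    (by simpa only [hterm] using hdom), hterm, hi]
  rfl

theorem fiber_over_typeIII_point_general
    (k K : Type*) [NontriviallyNormedField k] [NontriviallyNormedField K]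
    [IsAlgClosed k]
    [Algebra k K]
    (hiso : ∀ c : k, ‖algebraMap k K c‖ = ‖c‖)
    -- a type III point `ζ_{a,r}`: `a ∈ k`, `r > 0`, and `r ∉ |k^*|`:
    (a : k) (r : ℝ) (hr : 0 < r) (hr' : ∀ u : k, u ≠ 0 → ‖u‖ ≠ r) :
    -- the fiber over `ζ_{a,r}` is exactly the annulus `{z : |T - a|(z) = r}` …
    (∀ z : BerkPoint K,
      ((∀ f : Polynomial k, z.toFun (f.map (algebraMap k K)) = gaussPt k a r f) ↔
        z.toFun (Polynomial.X - Polynomial.C (algebraMap k K a)) = r)) ∧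
    -- … and it contains the point `ζ_{a,r}` regarded over `K` (its skeleton):
    (∀ f : Polynomial k,
      gaussPt K (algebraMap k K a) r (f.map (algebraMap k K)) = gaussPt k a r f) := by
  refine ⟨fun z => ⟨fun h => ?_, fun hz f => z.apply_map_eq_gaussPt _ hiso hr hr' hz f⟩,
    gaussPt_map _ hiso a r⟩
  have := h (X - C a)
  rwa [Polynomial.map_sub, map_X, map_C, gaussPt_X_sub_C a hr.le] at this

theorem fiber_over_typeIII_point
    (k K : Type*) [NontriviallyNormedField k] [NontriviallyNormedField K]
    [IsUltrametricDist k] [IsUltrametricDist K]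
    [IsAlgClosed k] [IsAlgClosed K] [CompleteSpace k] [CompleteSpace K]
    [Algebra k K]
    (hiso : ∀ c : k, ‖algebraMap k K c‖ = ‖c‖)
    (hfull : ∀ r : ℝ, 0 < r → ∃ y : K, ‖y‖ = r)
    (hres : ∀ y : K, ‖y‖ ≤ 1 → ∃ c : k, ‖y - algebraMap k K c‖ < 1)
    -- a type III point `ζ_{a,r}`: `a ∈ k`, `r > 0`, and `r ∉ |k^*|`:
    (a : k) (r : ℝ) (hr : 0 < r) (hr' : ∀ u : k, u ≠ 0 → ‖u‖ ≠ r) :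
    -- the fiber over `ζ_{a,r}` is exactly the annulus `{z : |T - a|(z) = r}` …
    (∀ z : BerkPoint K,
      ((∀ f : Polynomial k, z.toFun (f.map (algebraMap k K)) = gaussPt k a r f) ↔
        z.toFun (Polynomial.X - Polynomial.C (algebraMap k K a)) = r)) ∧
    -- … and it contains the point `ζ_{a,r}` regarded over `K` (its skeleton):
    (∀ f : Polynomial k,
      gaussPt K (algebraMap k K a) r (f.map (algebraMap k K)) = gaussPt k a r f) :=
  fiber_over_typeIII_point_general k K hiso a r hr hr'
end
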